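/- For all x < y in E_J: P_{x,y} = L_{(L(y)−L(x))/2}(Σ_{φ ∈ 𝓙(x,y)} 𝓡_φ), i.e. the weighted Kazhdan–Lusztig polynomial P_{x,y} is obtained from the sum of 𝓡_φ over all E_J-chains φ from x to y by keeping only the terms [q^γ]q^γ with 2γ < L(y) − L(x). (The sum is finite since 𝓡_φ = 0 for chains of length greater than ℓ(y) − ℓ(x) + 1.) -/

import Mathlib

set_option linter.unusedVariables false

open scoped Classical
noncomputable section
namespace WGI

variable (Γ : Type) [AddCommGroup Γ] [LinearOrder Γ] [IsOrderedAddMonoid Γ]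

/-- The group ring `ℤ[Γ]`, with basis `{q^γ : γ ∈ Γ}`. -/
abbrev LZ := AddMonoidAlgebra ℤ Γ

/-- The basis element `q^γ` of `ℤ[Γ]`. -/
def qp (γ : Γ) : LZ Γ := AddMonoidAlgebra.single γ 1

/-- The bar involution of `ℤ[Γ]`, sending `q^γ` to `q^{-γ}`. -/
def barZ : LZ Γ ≃+* LZ Γ :=
  (AddMonoidAlgebra.domCongr ℤ ℤ (AddEquiv.neg Γ)).toRingEquiv

/-- The coefficient `[q^γ] f`. -/
def coeffq (f : LZ Γ) (γ : Γ) : ℤ := f.coeff γ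

/-- The degree of `f ∈ ℤ[Γ]`: the maximum `γ` with `[q^γ] f ≠ 0` (`⊥` for `f = 0`). -/
def degq (f : LZ Γ) : WithBot Γ := f.coeff.support.max

/-- The truncation `U_{α/2}(f) = Σ_{2γ > α} [q^γ]f · q^γ`. -/
def Uhalf (α : Γ) (f : LZ Γ) : LZ Γ := AddMonoidAlgebra.ofCoeff (Finsupp.filter (fun γ => α < γ + γ) f.coeff)

/-- The truncation `L_{α/2}(f) = Σ_{2γ < α} [q^γ]f · q^γ`. -/
def Lhalf (α : Γ) (f : LZ Γ) : LZ Γ := AddMonoidAlgebra.ofCoeff (Finsupp.filter (fun γ => γ + γ < α) f.coeff)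

variable {B W : Type} [Group W] {M : CoxeterMatrix B} (cs : CoxeterSystem M W)

/-- The sign `ε_w = (-1)^{ℓ(w)}`. -/
def eps (w : W) : ℤ := (-1) ^ (cs.length w)

/-- The Bruhat order on `W`: generated by `u < tu` for reflections `t` with `ℓ(u) < ℓ(tu)`. -/
def BruhatLE : W → W → Prop :=
  Relation.ReflTransGen (fun u v => cs.length u < cs.length v ∧ ∃ t, cs.IsReflection t ∧ v = t * u)

/-- The strict Bruhat order. -/
def BruhatLT (u v : W) : Prop := BruhatLE cs u v ∧ u ≠ v

/-- `x` is a suffix of `y` iff `y = z * x` with `ℓ(y) = ℓ(z) + ℓ(x)`; this is the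
left weak Bruhat order `x ≤_L y`. -/
def IsSuffix (x y : W) : Prop := ∃ z, y = z * x ∧ cs.length y = cs.length z + cs.length x

/-- The set `D_J` of minimum coset representatives. -/
def DJ (J : Set B) : Set W := {w | ∀ j ∈ J, cs.length w < cs.length (w * cs.simple j)}

/-- The subgroup `Γ″` of `Γ` generated by the values `L(s)`, `s ∈ S`. -/
def GammaPP (L : W → Γ) : AddSubgroup Γ :=
  AddSubgroup.closure (Set.range fun i : B => L (cs.simple i))

/-- `f` lies in the subring `ℤ[Γ′]` of `ℤ`-linear combinations of products `∏ q_{s_i}^{n_i}`,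
equivalently the support of `f` is contained in `Γ″`. -/
def InZGammaPrime (L : W → Γ) (f : LZ Γ) : Prop :=
  ∀ γ ∈ f.coeff.support, γ ∈ GammaPP Γ cs L

/-- The `𝓡`-polynomial of a length-one multichain:
`𝓡_{x,y} = q_x^{-1} q_y · bar(R_{x,y})`. -/
def Rsingle (L : W → Γ) (Rp : W → W → LZ Γ) (x y : W) : LZ Γ :=
  qp Γ (L y - L x) * barZ Γ (Rp x y)

/-- The `𝓡`-polynomial `𝓡_φ` of a multichain `φ : x = c 0 ≤ c 1 ≤ ⋯ ≤ c (r+1) = y`,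
defined recursively by `𝓡_φ = 𝓡_{x,x₁} · U_{(L(y)-L(x₁))/2}(q_{x₁}^{-1} q_y bar(𝓡_{φ'}))`
where `φ'` is the tail of `φ`. -/
def RchainAux (L : W → Γ) (Rp : W → W → LZ Γ) : (r : ℕ) → (Fin (r + 2) → W) → LZ Γ
  | 0, c => Rsingle Γ L Rp (c 0) (c 1)
  | r + 1, c =>
      Rsingle Γ L Rp (c 0) (c 1) *
        Uhalf Γ (L (c (Fin.last (r + 2))) - L (c 1))
          (qp Γ (L (c (Fin.last (r + 2))) - L (c 1)) *
            barZ Γ (RchainAux L Rp r (fun i => c i.succ)))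

/-- The `𝓡*`-polynomial `𝓡*_φ` of a multichain `φ : x = c 0 ≤ ⋯ ≤ c (r+1) = y`,
defined recursively by `𝓡*_φ = U_{(L(x_r)-L(x))/2}(q_x^{-1} q_{x_r} bar(𝓡*_{φ'})) · 𝓡*_{x_r,y}`
where `φ'` is the initial segment of `φ`. -/
def RstarAux (L : W → Γ) (Rt : W → W → LZ Γ) : (r : ℕ) → (Fin (r + 2) → W) → LZ Γ
  | 0, c => Rsingle Γ L Rt (c 0) (c 1)
  | r + 1, c =>
      Uhalf Γ (L (c ⟨r + 1, by omega⟩) - L (c 0))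
          (qp Γ (L (c ⟨r + 1, by omega⟩) - L (c 0)) *
            barZ Γ (RstarAux L Rt r (fun i => c i.castSucc))) *
        Rsingle Γ L Rt (c ⟨r + 1, by omega⟩) (c (Fin.last (r + 2)))

/-- An `E_J`-multichain `x = x₀ ≤ x₁ ≤ ⋯ ≤ x_{r+1} = y` (Bruhat order) with all entries in `E`. -/
structure MChain (E : Set W) (x y : W) where
  r : ℕ
  c : Fin (r + 2) → W
  first : c 0 = x
  last : c (Fin.last (r + 1)) = y
  mem : ∀ i, c i ∈ E
  mono : ∀ i : Fin (r + 1), BruhatLE cs (c i.castSucc) (c i.succ)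

/-- An `E_J`-multichain is an `E_J`-chain when all steps are strict. -/
def MChain.IsStrict {E : Set W} {x y : W} (φ : MChain cs E x y) : Prop :=
  ∀ i : Fin (φ.r + 1), BruhatLT cs (φ.c i.castSucc) (φ.c i.succ)

/-!
Inverting the defining identity of `P` gives
`P_{x,y} = q_x⁻¹ q_y bar(P_{x,y}) + Σ_{x < t ≤ y} 𝓡_{x,t} · q_t⁻¹ q_y bar(P_{t,y})`.
The first term only has exponents `γ` with `2γ > L(y) - L(x)`, so it is killed by
`L_{(L(y)-L(x))/2}`, which fixes `P_{x,y}`. By induction on `ℓ(y) - ℓ(x)`, and because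
`f ↦ q^β bar f` exchanges `L_{β/2}` and `U_{β/2}`, each remaining term is
`𝓡_{x,t} · U_{(L(y)-L(t))/2}(q_t⁻¹ q_y bar Σ_{𝓙(t,y)} 𝓡_ψ)`, and grouping the chains in
`𝓙(x,y)` by their second entry identifies the total with `Σ_{𝓙(x,y)} 𝓡_φ`.

All sums are finite because Bruhat lower intervals are finite; this rests on the strong exchange
condition, proved with Tits' sign representation of `W` on `W × ℤˣ`.
-/

section GroupRing

omit [LinearOrder Γ] [IsOrderedAddMonoid Γ]

lemma qp_mul_qp (γ δ : Γ) : qp Γ γ * qp Γ δ = qp Γ (γ + δ) := by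
  simp [qp, AddMonoidAlgebra.single_mul_single]

lemma qp_zero : qp Γ 0 = 1 := rfl

lemma coeff_qp_mul (γ : Γ) (f : LZ Γ) (δ : Γ) : (qp Γ γ * f).coeff δ = f.coeff (δ - γ) := by
  rw [qp, AddMonoidAlgebra.coeff_single_mul_apply, one_mul, sub_eq_neg_add]

lemma coeff_barZ (f : LZ Γ) (γ : Γ) : (barZ Γ f).coeff γ = f.coeff (-γ) :=
  AddMonoidAlgebra.coeff_domCongr (R := ℤ) (A := ℤ) (AddEquiv.neg Γ) f γ

lemma barZ_barZ (f : LZ Γ) : barZ Γ (barZ Γ f) = f := by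
  ext γ
  rw [coeff_barZ, coeff_barZ, neg_neg]

lemma barZ_qp (γ : Γ) : barZ Γ (qp Γ γ) = qp Γ (-γ) := by
  ext δ
  simp only [coeff_barZ, qp, AddMonoidAlgebra.coeff_single, Finsupp.single_apply, neg_eq_iff_eq_neg]

end GroupRing

section Truncation

omit [IsOrderedAddMonoid Γ]

lemma coeff_Lhalf (α : Γ) (f : LZ Γ) (γ : Γ) :
    (Lhalf Γ α f).coeff γ = if γ + γ < α then f.coeff γ else 0 :=
  Finsupp.filter_apply _ _ _

lemma coeff_Uhalf (α : Γ) (f : LZ Γ) (γ : Γ) :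
    (Uhalf Γ α f).coeff γ = if α < γ + γ then f.coeff γ else 0 :=
  Finsupp.filter_apply _ _ _

lemma Lhalf_add (α : Γ) (f g : LZ Γ) : Lhalf Γ α (f + g) = Lhalf Γ α f + Lhalf Γ α g := by
  ext γ
  simp only [coeff_Lhalf, AddMonoidAlgebra.coeff_add, Finsupp.add_apply]
  split_ifs <;> simp

lemma Uhalf_add (α : Γ) (f g : LZ Γ) : Uhalf Γ α (f + g) = Uhalf Γ α f + Uhalf Γ α g := by
  ext γ
  simp only [coeff_Uhalf, AddMonoidAlgebra.coeff_add, Finsupp.add_apply]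
  split_ifs <;> simp

lemma Lhalf_Uhalf (α : Γ) (f : LZ Γ) : Lhalf Γ α (Uhalf Γ α f) = 0 := by
  ext γ
  simp only [coeff_Lhalf, coeff_Uhalf, AddMonoidAlgebra.coeff_zero, Finsupp.coe_zero, Pi.zero_apply]
  split_ifs with h₁ h₂ <;> first | rfl | exact absurd h₂ (lt_asymm h₁)

lemma Lhalf_eq_self {α : Γ} {f : LZ Γ} (h : ∀ γ ∈ f.coeff.support, γ + γ < α) :
    Lhalf Γ α f = f := by
  ext γ
  rw [coeff_Lhalf]
  split_ifs with hγ
  · rfl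
  · exact (Finsupp.notMem_support_iff.mp fun hmem => hγ (h γ hmem)).symm

end Truncation

lemma Lhalf_eq_self_of_degq_eq {f : LZ Γ} {d α : Γ} (hd : degq Γ f = d) (hdα : d + d < α) :
    Lhalf Γ α f = f :=
  Lhalf_eq_self Γ fun γ hγ =>
    have hγd : γ ≤ d := WithBot.coe_le_coe.mp (hd ▸ Finset.le_max hγ)
    (add_le_add hγd hγd).trans_lt hdα

/-- The truncations are exchanged by `f ↦ q^β · bar f`, since `2(β - γ) < β ↔ β < 2γ`. -/
lemma Uhalf_qp_mul_barZ (β : Γ) (f : LZ Γ) :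
    Uhalf Γ β (qp Γ β * barZ Γ f) = qp Γ β * barZ Γ (Lhalf Γ β f) := by
  ext γ
  simp only [coeff_Uhalf, coeff_qp_mul, coeff_barZ, coeff_Lhalf, neg_sub]
  have hiff : (β - γ) + (β - γ) < β ↔ β < γ + γ := by
    rw [show (β - γ) + (β - γ) = β + (β - (γ + γ)) by abel, add_lt_iff_neg_left, sub_neg]
  exact if_congr hiff.symm rfl rfl

section SignRepresentation

open CoxeterSystem

local prefix:100 "π " => cs.wordProd
local prefix:100 "ris " => cs.rightInvSeq
local prefix:100 "lis " => cs.leftInvSeq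

lemma simple_mul_mul_simple_eq_simple_iff (i : B) (t : W) :
    cs.simple i * t * cs.simple i = cs.simple i ↔ t = cs.simple i := by
  rw [mul_assoc, mul_eq_left, mul_eq_one_iff_eq_inv, cs.inv_simple]

/-- Tits' sign representation on the generators; the first coordinate stands for a reflection. -/
def signPerm (i : B) : Equiv.Perm (W × ℤˣ) :=
  Function.Involutive.toPerm
    (fun p => (cs.simple i * p.1 * cs.simple i, if p.1 = cs.simple i then -p.2 else p.2))
    (by
      rintro ⟨t, e⟩
      simp only [simple_mul_mul_simple_eq_simple_iff, Prod.mk.injEq]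
      refine ⟨by simp [← mul_assoc], ?_⟩
      split_ifs <;> simp)

lemma signPerm_apply (i : B) (t : W) (e : ℤˣ) :
    signPerm cs i (t, e) =
      (cs.simple i * t * cs.simple i, if t = cs.simple i then -e else e) := rfl

lemma prod_map_signPerm_apply (ω : List B) (t : W) (e : ℤˣ) :
    (ω.map (signPerm cs)).prod (t, e) =
      (π ω * t * (π ω)⁻¹, e * (-1) ^ (ris ω).count t) := by
  induction ω generalizing t e with
  | nil => simp
  | cons i ω ih =>
    rw [List.map_cons, List.prod_cons, Equiv.Perm.mul_apply, ih, signPerm_apply]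
    have hhead : π ω * t * (π ω)⁻¹ = cs.simple i ↔ (π ω)⁻¹ * cs.simple i * π ω = t := by
      constructor <;> intro h <;> rw [← h] <;> group
    simp only [wordProd_cons, rightInvSeq, List.count_cons, beq_iff_eq, hhead, mul_inv_rev,
      inv_simple, Prod.mk.injEq]
    constructor
    · group
    · split_ifs <;> simp [pow_succ]

lemma alternatingWord_two_mul_succ (i j : B) (m : ℕ) :
    alternatingWord i j (2 * (m + 1)) = i :: j :: alternatingWord i j (2 * m) := by
  rw [show 2 * (m + 1) = 2 * m + 1 + 1 by ring, alternatingWord_succ', alternatingWord_succ']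
  simp

lemma reverse_alternatingWord_two_mul (i j : B) (m : ℕ) :
    (alternatingWord i j (2 * m)).reverse = alternatingWord j i (2 * m) := by
  induction m with
  | zero => rfl
  | succ m ih =>
    rw [alternatingWord_two_mul_succ, List.reverse_cons, List.reverse_cons, ih,
      show 2 * (m + 1) = 2 * m + 1 + 1 by ring, alternatingWord_succ, alternatingWord_succ]
    simp

lemma prod_map_alternatingWord_two_mul {G : Type*} [Monoid G] (f : B → G) (i j : B) (m : ℕ) :
    ((alternatingWord i j (2 * m)).map f).prod = (f i * f j) ^ m := by
  induction m with
  | zero => simp [alternatingWord]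
  | succ m ih => simp [alternatingWord_two_mul_succ, ih, pow_succ', mul_assoc]

lemma wordProd_alternatingWord_add_two_mul (i j : B) (n : ℕ) :
    π (alternatingWord i j (n + 2 * M i j)) = π (alternatingWord i j n) := by
  simp only [prod_alternatingWord_eq_mul_pow, Nat.add_mul_div_left n _ two_pos, pow_add,
    cs.simple_mul_simple_pow, mul_one, Nat.even_add, even_two_mul, iff_true]

/-- The inversion sequence of the word `(i j)^m`, `m = M i j`, repeats with period `m`
because `(s i s j)^m = 1`. -/
lemma even_count_rightInvSeq_alternatingWord (i j : B) (t : W) :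
    Even ((ris (alternatingWord i j (2 * M i j))).count t) := by
  set m := M i j
  rw [← reverse_alternatingWord_two_mul, rightInvSeq_reverse, List.count_reverse]
  have hperiod : (lis (alternatingWord j i (2 * m))).drop m =
      (lis (alternatingWord j i (2 * m))).take m := by
    refine List.ext_getElem (by simp; omega) fun k hk _ => ?_
    simp only [List.getElem_drop, List.getElem_take]
    rw [getElem_leftInvSeq_alternatingWord cs j i m _ (by simp at hk; omega),
      getElem_leftInvSeq_alternatingWord cs j i m _ (by simp at hk; omega),
      show 2 * (m + k) + 1 = 2 * k + 1 + 2 * M i j by ring, wordProd_alternatingWord_add_two_mul]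
  rw [← List.take_append_drop m (lis _), List.count_append, hperiod]
  exact ⟨_, rfl⟩

lemma isLiftable_signPerm : M.IsLiftable (signPerm cs) := by
  intro i j
  ext ⟨t, e⟩ : 1
  rw [← prod_map_alternatingWord_two_mul, prod_map_signPerm_apply,
    (even_count_rightInvSeq_alternatingWord cs i j t).neg_one_pow, prod_alternatingWord_eq_mul_pow]
  simp [cs.simple_mul_simple_pow]

def signRep : W →* Equiv.Perm (W × ℤˣ) := cs.lift ⟨signPerm cs, isLiftable_signPerm cs⟩

lemma signRep_simple (i : B) : signRep cs (cs.simple i) = signPerm cs i :=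
  cs.lift_apply_simple (isLiftable_signPerm cs) i

lemma signRep_wordProd (ω : List B) : signRep cs (π ω) = (ω.map (signPerm cs)).prod := by
  rw [wordProd, map_list_prod, List.map_map]
  exact congrArg List.prod (List.map_congr_left fun i _ => signRep_simple cs i)

def inversionSign (w t : W) : ℤˣ := (signRep cs w (t, 1)).2

lemma inversionSign_wordProd (ω : List B) (t : W) :
    inversionSign cs (π ω) t = (-1) ^ (ris ω).count t := by
  rw [inversionSign, signRep_wordProd, prod_map_signPerm_apply, one_mul]

lemma signRep_apply (w t : W) (e : ℤˣ) :
    signRep cs w (t, e) = (w * t * w⁻¹, e * inversionSign cs w t) := by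
  obtain ⟨ω, rfl⟩ := cs.wordProd_surjective w
  rw [inversionSign_wordProd, signRep_wordProd, prod_map_signPerm_apply]

lemma inversionSign_mul (u v t : W) :
    inversionSign cs (u * v) t = inversionSign cs v t * inversionSign cs u (v * t * v⁻¹) := by
  have h := congrArg Prod.snd (signRep_apply cs (u * v) t 1)
  rw [map_mul, Equiv.Perm.mul_apply, signRep_apply, signRep_apply] at h
  simpa using h.symm

lemma inversionSign_self {t : W} (ht : cs.IsReflection t) : inversionSign cs t t = -1 := by
  obtain ⟨c, i, rfl⟩ := ht
  set ε := inversionSign cs c⁻¹ (c * cs.simple i * c⁻¹)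
  have hdown : signRep cs c⁻¹ (c * cs.simple i * c⁻¹, 1) = (cs.simple i, ε) := by
    rw [signRep_apply, one_mul]
    congr 1
    group
  have hup : ε * inversionSign cs c (cs.simple i) = 1 := by
    have h := congrArg (signRep cs c) hdown
    rw [← Equiv.Perm.mul_apply, ← map_mul, mul_inv_cancel, map_one, signRep_apply] at h
    exact (congrArg Prod.snd h).symm
  rw [inversionSign, map_mul, map_mul, Equiv.Perm.mul_apply, Equiv.Perm.mul_apply, hdown,
    signRep_simple, signPerm_apply, if_pos rfl, signRep_apply]
  simp [hup]

lemma mem_rightInvSeq_of_inversionSign_eq_neg_one {ω : List B} {t : W}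
    (h : inversionSign cs (π ω) t = -1) : t ∈ ris ω := by
  rw [inversionSign_wordProd] at h
  refine List.count_pos_iff.mp (Nat.pos_of_ne_zero fun h0 => ?_)
  rw [h0, pow_zero] at h
  exact absurd h (by decide)

lemma isRightInversion_of_inversionSign_eq_neg_one {w t : W} (ht : cs.IsReflection t)
    (h : inversionSign cs w t = -1) : cs.IsRightInversion w t := by
  obtain ⟨ω, hred, rfl⟩ := cs.exists_isReduced w
  exact cs.isRightInversion_of_mem_rightInvSeq hred
    (mem_rightInvSeq_of_inversionSign_eq_neg_one cs h)

/-- The strong exchange condition: since `w = (w t) t` and `inversionSign t t = -1`, exactly one of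
`w`, `w t` has sign `-1` at `t`, and only the longer one can have `t` as a right inversion. -/
lemma inversionSign_eq_neg_one_of_isRightInversion {w t : W} (h : cs.IsRightInversion w t) :
    inversionSign cs w t = -1 := by
  obtain ⟨ht, hlt⟩ := h
  have hsplit := inversionSign_mul cs (w * t) t t
  rw [mul_inv_cancel_right, mul_assoc, ht.mul_self, mul_one, inversionSign_self cs ht] at hsplit
  rcases Int.units_eq_one_or (inversionSign cs (w * t) t) with h1 | h1
  · rw [hsplit, h1, mul_one]
  · have hinv := (isRightInversion_of_inversionSign_eq_neg_one cs ht h1).2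
    rw [mul_assoc, ht.mul_self, mul_one] at hinv
    exact absurd hlt (lt_asymm hinv)

lemma finite_setOf_isLeftInversion (w : W) : {t : W | cs.IsLeftInversion w t}.Finite := by
  obtain ⟨ω, -, hω⟩ := cs.exists_isReduced w⁻¹
  refine (List.finite_toSet (ris ω)).subset fun t ht => ?_
  rw [Set.mem_ofPred_eq, ← cs.isRightInversion_inv_iff, hω] at ht
  exact mem_rightInvSeq_of_inversionSign_eq_neg_one cs
    (inversionSign_eq_neg_one_of_isRightInversion cs ht)

end SignRepresentation

section BruhatOrder

lemma BruhatLE.refl (x : W) : BruhatLE cs x x := Relation.ReflTransGen.refl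

variable {cs} {x y z : W} {E : Set W}

lemma BruhatLE.trans (h₁ : BruhatLE cs x y) (h₂ : BruhatLE cs y z) : BruhatLE cs x z :=
  Relation.ReflTransGen.trans h₁ h₂

lemma BruhatLE.eq_or_length_lt (h : BruhatLE cs x y) : x = y ∨ cs.length x < cs.length y := by
  induction h with
  | refl => exact .inl rfl
  | tail _ hstep ih => exact .inr (ih.elim (· ▸ hstep.1) (·.trans hstep.1))

lemma BruhatLE.length_le (h : BruhatLE cs x y) : cs.length x ≤ cs.length y :=
  h.eq_or_length_lt.elim (fun h => h ▸ le_rfl) le_of_lt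

lemma BruhatLT.length_lt (h : BruhatLT cs x y) : cs.length x < cs.length y :=
  h.1.eq_or_length_lt.resolve_left h.2

lemma BruhatLE.antisymm (h₁ : BruhatLE cs x y) (h₂ : BruhatLE cs y x) : x = y :=
  h₁.eq_or_length_lt.resolve_right (h₂.length_le.not_gt)

lemma BruhatLT.trans_le (h₁ : BruhatLT cs x y) (h₂ : BruhatLE cs y z) : BruhatLT cs x z :=
  ⟨h₁.1.trans h₂, by rintro rfl; exact h₁.2 (h₁.1.antisymm h₂)⟩

lemma setOf_bruhatLE_bruhatLE_eq_insert (hx : x ∈ E) (hy : y ∈ E) (hxy : BruhatLT cs x y) :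
    {t | t ∈ E ∧ BruhatLE cs x t ∧ BruhatLE cs t y} =
      insert x (insert y {t | t ∈ E ∧ BruhatLT cs x t ∧ BruhatLT cs t y}) := by
  ext t
  simp only [Set.mem_insert_iff, Set.mem_ofPred_eq]
  constructor
  · rintro ⟨ht, hxt, hty⟩
    by_cases htx : t = x
    · exact .inl htx
    by_cases hty' : t = y
    · exact .inr (.inl hty')
    exact .inr (.inr ⟨ht, ⟨hxt, Ne.symm htx⟩, ⟨hty, hty'⟩⟩)
  · rintro (rfl | rfl | ⟨ht, hxt, hty⟩)
    exacts [⟨hx, .refl cs _, hxy.1⟩, ⟨hy, hxy.1, .refl cs _⟩, ⟨ht, hxt.1, hty.1⟩]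

variable (cs)

/-- Every step down from `y` in the Bruhat order multiplies by one of the finitely many left
inversions of `y`, and lowers the length. -/
lemma finite_setOf_bruhatLE (y : W) : {x | BruhatLE cs x y}.Finite := by
  induction hn : cs.length y using Nat.strong_induction_on generalizing y with
  | _ n ih =>
  have hsub : {x | BruhatLE cs x y} ⊆
      insert y (⋃ t ∈ {t | cs.IsLeftInversion y t}, {x | BruhatLE cs x (t * y)}) := by
    intro x hx
    rcases Relation.ReflTransGen.cases_tail hx with rfl | ⟨c, hxc, hlen, t, ht, rfl⟩
    · exact Set.mem_insert _ _
    · have hc : t * (t * c) = c := by rw [← mul_assoc, ht.mul_self, one_mul]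
      exact Set.mem_insert_of_mem _ (Set.mem_biUnion (x := t) ⟨ht, by rwa [hc]⟩ (by rwa [hc]))
  exact (((finite_setOf_isLeftInversion cs y).biUnion fun t ht =>
    ih _ (hn ▸ ht.2) _ rfl).insert y).subset hsub

end BruhatOrder

lemma List.finite_setOf_length_le_forall_mem {α : Type*} {S : Set α} (hS : S.Finite) (n : ℕ) :
    {l : List α | l.length ≤ n ∧ ∀ a ∈ l, a ∈ S}.Finite := by
  have := hS.to_subtype
  refine ((List.finite_length_le S n).image (List.map Subtype.val)).subset ?_
  rintro l ⟨hl, hlS⟩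
  lift l to List S using hlS
  exact ⟨l, by simpa using hl, rfl⟩

namespace MChain

variable {cs} {E : Set W} {x y : W}

lemma ofFn_injective : Function.Injective fun φ : MChain cs E x y => List.ofFn φ.c := by
  rintro ⟨r, c, _, _, _, _⟩ ⟨r', c', _, _, _, _⟩ (h : List.ofFn c = List.ofFn c')
  obtain ⟨hr, hc⟩ := Sigma.mk.inj_iff.mp (List.ofFn_inj'.mp h)
  obtain rfl : r = r' := by omega
  cases eq_of_heq hc
  rfl

lemma bruhatLE_last (φ : MChain cs E x y) (i : Fin (φ.r + 2)) : BruhatLE cs (φ.c i) y :=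
  Fin.reverseInduction (motive := fun i => BruhatLE cs (φ.c i) y)
    (by rw [φ.last]; exact BruhatLE.refl cs y) (fun j hj => (φ.mono j).trans hj) i

lemma length_add_le {φ : MChain cs E x y} (hφ : φ.IsStrict cs) (i : Fin (φ.r + 2)) :
    cs.length x + i ≤ cs.length (φ.c i) := by
  induction i using Fin.induction with
  | zero => simp [φ.first]
  | succ j ih =>
    have := (hφ j).length_lt
    simp only [Fin.val_succ, Fin.val_castSucc] at ih ⊢
    omega

lemma IsStrict.bruhatLT_one {φ : MChain cs E x y} (hφ : φ.IsStrict cs) :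
    BruhatLT cs x (φ.c 1) := by
  simpa [φ.first] using hφ 0

lemma IsStrict.one_bruhatLT {φ : MChain cs E x y} (hφ : φ.IsStrict cs) (hr : φ.r ≠ 0) :
    BruhatLT cs (φ.c 1) y := by
  have h := hφ ⟨1, by omega⟩
  rw [show (⟨1, _⟩ : Fin (φ.r + 1)).castSucc = 1 from Fin.ext (by simp)] at h
  exact h.trans_le (φ.bruhatLE_last _)

variable (cs E x y) in
lemma finite_setOf_isStrict : {φ : MChain cs E x y | φ.IsStrict cs}.Finite := by
  refine Set.Finite.of_finite_image ?_ ofFn_injective.injOn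
  refine ((List.finite_setOf_length_le_forall_mem (finite_setOf_bruhatLE cs y)
    (cs.length y + 1)).subset ?_)
  rintro _ ⟨φ, hφ, rfl⟩
  have := φ.length_add_le hφ (Fin.last _)
  rw [φ.last, Fin.val_last] at this
  refine ⟨by simp; omega, fun a ha => ?_⟩
  obtain ⟨i, rfl⟩ := List.mem_ofFn.mp ha
  exact φ.bruhatLE_last i

def single (hx : x ∈ E) (hy : y ∈ E) (hxy : BruhatLE cs x y) : MChain cs E x y where
  r := 0
  c := ![x, y]
  first := rfl
  last := rfl
  mem := Fin.forall_fin_two.mpr ⟨hx, hy⟩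
  mono := Fin.forall_fin_one.mpr hxy

lemma eq_single_of_r_eq_zero (hx : x ∈ E) (hy : y ∈ E) (hxy : BruhatLE cs x y)
    (φ : MChain cs E x y) (hr : φ.r = 0) : φ = single hx hy hxy := by
  match φ, hr with
  | ⟨0, c, first, last, _, _⟩, _ =>
    obtain rfl : c = ![x, y] := funext <| Fin.forall_fin_two.mpr ⟨first, last⟩
    rfl

def cons (hx : x ∈ E) {t : W} (hxt : BruhatLE cs x t) (ψ : MChain cs E t y) :
    MChain cs E x y where
  r := ψ.r + 1
  c := Fin.cons x ψ.c
  first := rfl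
  last := by simpa [← Fin.succ_last] using ψ.last
  mem := Fin.cases hx ψ.mem
  mono := Fin.cases (by simpa [ψ.first] using hxt) fun i => by simpa using ψ.mono i

lemma ofFn_cons (hx : x ∈ E) {t : W} (hxt : BruhatLE cs x t) (ψ : MChain cs E t y) :
    List.ofFn (cons hx hxt ψ).c = x :: List.ofFn ψ.c := by
  simp [cons, List.ofFn_succ]

lemma cons_injective (hx : x ∈ E) {t : W} (hxt : BruhatLE cs x t) :
    Function.Injective (cons (y := y) hx hxt) := fun ψ ψ' h =>
  ofFn_injective (List.cons_injective ((ofFn_cons hx hxt ψ).symm.trans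
    ((congrArg (fun φ => List.ofFn φ.c) h).trans (ofFn_cons hx hxt ψ'))))

lemma IsStrict.cons (hx : x ∈ E) {t : W} (hxt : BruhatLT cs x t) {ψ : MChain cs E t y}
    (hψ : ψ.IsStrict cs) : (cons hx hxt.1 ψ).IsStrict cs :=
  Fin.cases (by
      show BruhatLT cs (Fin.cons (α := fun _ => W) x ψ.c 0)
        (Fin.cons (α := fun _ => W) x ψ.c (Fin.succ 0))
      rwa [Fin.cons_zero, Fin.cons_succ, ψ.first])
    fun (i : Fin (ψ.r + 1)) => by simpa [MChain.cons] using hψ i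

lemma exists_eq_cons (hx : x ∈ E) {t : W} (hxt : BruhatLE cs x t) {φ : MChain cs E x y}
    (hφ : φ.IsStrict cs) (hr : φ.r ≠ 0) (ht : φ.c 1 = t) :
    ∃ ψ : MChain cs E t y, ψ.IsStrict cs ∧ cons hx hxt ψ = φ := by
  obtain ⟨_ | r, c, rfl, last, mem, mono⟩ := φ
  · exact absurd rfl hr
  refine ⟨⟨r, Fin.tail c, ht, last, fun i => mem _, fun i => mono i.succ⟩,
    fun i => hφ i.succ, ?_⟩
  simp [cons, Fin.cons_self_tail]

end MChain

section ChainPolynomials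

omit [IsOrderedAddMonoid Γ]

variable (L : W → Γ) (Rp : W → W → LZ Γ)

/-- The sum `Σ_{φ ∈ 𝓙(x,y)} 𝓡_φ` over the `E`-chains from `x` to `y`. -/
def strictChainSum (E : Set W) (x y : W) : LZ Γ :=
  ∑ᶠ φ ∈ {φ : MChain cs E x y | φ.IsStrict cs}, RchainAux Γ L Rp φ.r φ.c

variable {cs} {E : Set W} {x y : W}

lemma RchainAux_single (hx : x ∈ E) (hy : y ∈ E) (hxy : BruhatLE cs x y) :
    RchainAux Γ L Rp (MChain.single hx hy hxy).r (MChain.single hx hy hxy).c =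
      Rsingle Γ L Rp x y := rfl

lemma RchainAux_cons (hx : x ∈ E) {t : W} (hxt : BruhatLE cs x t) (ψ : MChain cs E t y) :
    RchainAux Γ L Rp (MChain.cons hx hxt ψ).r (MChain.cons hx hxt ψ).c =
      Rsingle Γ L Rp x t *
        Uhalf Γ (L y - L t) (qp Γ (L y - L t) * barZ Γ (RchainAux Γ L Rp ψ.r ψ.c)) := by
  have hlast := (MChain.cons hx hxt ψ).last
  simp only [MChain.cons] at hlast ⊢
  rw [RchainAux, hlast]
  simp [ψ.first]

/-- Splitting off the one-step chain and grouping the other chains by their second entry `t`. -/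
lemma strictChainSum_eq (hx : x ∈ E) (hy : y ∈ E) (hxy : BruhatLT cs x y) :
    strictChainSum Γ cs L Rp E x y = Rsingle Γ L Rp x y +
      ∑ᶠ t ∈ {t | t ∈ E ∧ BruhatLT cs x t ∧ BruhatLT cs t y}, Rsingle Γ L Rp x t *
        Uhalf Γ (L y - L t) (qp Γ (L y - L t) * barZ Γ (strictChainSum Γ cs L Rp E t y)) := by
  set S := {φ : MChain cs E x y | φ.IsStrict cs}
  set T := {t | t ∈ E ∧ BruhatLT cs x t ∧ BruhatLT cs t y}
  set F : W → Set (MChain cs E x y) := fun t => {φ | φ ∈ S ∧ φ.r ≠ 0 ∧ φ.c 1 = t}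
  have hS := MChain.finite_setOf_isStrict cs E x y
  have hT : T.Finite := (finite_setOf_bruhatLE cs y).subset fun t ht => ht.2.2.1
  have hsingle : S ∩ {φ | φ.r = 0} = {MChain.single hx hy hxy.1} := by
    ext φ
    refine ⟨fun h => MChain.eq_single_of_r_eq_zero hx hy hxy.1 φ h.2, ?_⟩
    rintro rfl
    exact ⟨Fin.forall_fin_one.mpr (by simpa [MChain.single] using hxy), rfl⟩
  have hfibres : S \ {φ | φ.r = 0} = ⋃ t ∈ T, F t := by
    ext φ
    simp only [Set.mem_sdiff, Set.mem_iUnion, Set.mem_ofPred_eq, exists_prop, F, T]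
    exact ⟨fun h => ⟨_, ⟨φ.mem 1, h.1.bruhatLT_one, h.1.one_bruhatLT h.2⟩, h.1, h.2, rfl⟩,
      fun ⟨_, _, h, hr, _⟩ => ⟨h, hr⟩⟩
  have hdisj : T.PairwiseDisjoint F := fun t _ t' _ htt' =>
    Set.disjoint_left.mpr fun φ h h' => htt' (h.2.2.symm.trans h'.2.2)
  rw [strictChainSum, ← finsum_mem_inter_add_sdiff {φ | φ.r = 0} hS, hsingle,
    finsum_mem_singleton, RchainAux_single, hfibres,
    finsum_mem_biUnion hdisj hT fun t _ => hS.subset fun φ h => h.1]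
  refine congrArg _ (finsum_mem_congr rfl fun t ht => ?_)
  let G : LZ Γ →+ LZ Γ := AddMonoidHom.mk'
    (fun f => Rsingle Γ L Rp x t * Uhalf Γ (L y - L t) (qp Γ (L y - L t) * barZ Γ f))
    fun f g => by simp only [map_add, mul_add, Uhalf_add]
  change _ = G (strictChainSum Γ cs L Rp E t y)
  rw [strictChainSum, G.map_finsum_mem _ (MChain.finite_setOf_isStrict cs E t y)]
  refine (finsum_mem_eq_of_bijOn (MChain.cons hx ht.2.1.1) ⟨?_, ?_, ?_⟩ fun ψ _ => ?_).symm
  · exact fun ψ hψ => ⟨hψ.cons hx ht.2.1, ψ.r.succ_ne_zero, ψ.first⟩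
  · exact (MChain.cons_injective hx ht.2.1.1).injOn
  · rintro φ ⟨hφ, hr, h1⟩
    obtain ⟨ψ, hψ, rfl⟩ := MChain.exists_eq_cons hx ht.2.1.1 hφ hr h1
    exact ⟨ψ, hψ, rfl⟩
  · exact (RchainAux_cons Γ L Rp hx ht.2.1.1 ψ).symm

end ChainPolynomials

section KazhdanLusztig

variable {Γ} {cs} {L : W → Γ} {E : Set W} {Rp P : W → W → LZ Γ}

section

omit [LinearOrder Γ] [IsOrderedAddMonoid Γ]

lemma Rp_self (hPdiag : ∀ x ∈ E, P x x = 1)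
    (hPdef : ∀ x y : W, x ∈ E → y ∈ E → BruhatLE cs x y →
      qp Γ (L y - L x) * barZ Γ (P x y) =
        ∑ᶠ t ∈ {t : W | t ∈ E ∧ BruhatLE cs x t ∧ BruhatLE cs t y}, Rp x t * P t y)
    {x : W} (hx : x ∈ E) : Rp x x = 1 := by
  have h := hPdef x x hx hx (.refl cs x)
  have hsingleton : {t : W | t ∈ E ∧ BruhatLE cs x t ∧ BruhatLE cs t x} = {x} :=
    Set.ext fun t => ⟨fun ht => ht.2.2.antisymm ht.2.1,
      by rintro rfl; exact ⟨hx, .refl cs t, .refl cs t⟩⟩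
  rwa [hsingleton, finsum_mem_singleton, hPdiag x hx, mul_one, sub_self, qp_zero, map_one,
    one_mul, eq_comm] at h

/-- The defining identity of `P`, solved for `P x y` by applying `f ↦ q_x^{-1} q_y bar f`. -/
lemma P_eq_finsum_Rsingle_mul
    (hPdef : ∀ x y : W, x ∈ E → y ∈ E → BruhatLE cs x y →
      qp Γ (L y - L x) * barZ Γ (P x y) =
        ∑ᶠ t ∈ {t : W | t ∈ E ∧ BruhatLE cs x t ∧ BruhatLE cs t y}, Rp x t * P t y)
    {x y : W} (hx : x ∈ E) (hy : y ∈ E) (hxy : BruhatLE cs x y) :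
    P x y = ∑ᶠ t ∈ {t | t ∈ E ∧ BruhatLE cs x t ∧ BruhatLE cs t y},
      Rsingle Γ L Rp x t * (qp Γ (L y - L t) * barZ Γ (P t y)) := by
  have hfin : {t | t ∈ E ∧ BruhatLE cs x t ∧ BruhatLE cs t y}.Finite :=
    (finite_setOf_bruhatLE cs y).subset fun t ht => ht.2.2
  let G : LZ Γ →+ LZ Γ := AddMonoidHom.mk' (fun f => qp Γ (L y - L x) * barZ Γ f)
    fun f g => by simp only [map_add, mul_add]
  have h := congrArg G (hPdef x y hx hy hxy)
  rw [G.map_finsum_mem _ hfin] at h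
  convert h using 1
  · simp [G, barZ_barZ, barZ_qp, ← mul_assoc, qp_mul_qp, qp_zero]
  · refine finsum_mem_congr rfl fun t _ => ?_
    simp only [G, AddMonoidHom.mk'_apply, Rsingle, map_mul]
    rw [show L y - L x = (L t - L x) + (L y - L t) by abel, ← qp_mul_qp]
    ring

end

theorem P_eq_Lhalf_strictChainSum (hPdiag : ∀ x ∈ E, P x x = 1)
    (hPdeg : ∀ x y : W, x ∈ E → y ∈ E → BruhatLT cs x y → P x y ≠ 0 →
      ∃ d : Γ, degq Γ (P x y) = (d : WithBot Γ) ∧ d + d < L y - L x)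
    (hPdef : ∀ x y : W, x ∈ E → y ∈ E → BruhatLE cs x y →
      qp Γ (L y - L x) * barZ Γ (P x y) =
        ∑ᶠ t ∈ {t : W | t ∈ E ∧ BruhatLE cs x t ∧ BruhatLE cs t y}, Rp x t * P t y)
    {x y : W} (hx : x ∈ E) (hy : y ∈ E) (hxy : BruhatLT cs x y) :
    P x y = Lhalf Γ (L y - L x) (strictChainSum Γ cs L Rp E x y) := by
  have hP : Lhalf Γ (L y - L x) (P x y) = P x y := by
    by_cases h0 : P x y = 0
    · exact Lhalf_eq_self Γ (by simp [h0])
    obtain ⟨d, hd, hdα⟩ := hPdeg x y hx hy hxy h0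
    exact Lhalf_eq_self_of_degq_eq Γ hd hdα
  have hsplit : P x y = qp Γ (L y - L x) * barZ Γ (P x y) + strictChainSum Γ cs L Rp E x y := by
    conv_lhs => rw [P_eq_finsum_Rsingle_mul hPdef hx hy hxy.1]
    have hxT : x ∉ insert y {t | t ∈ E ∧ BruhatLT cs x t ∧ BruhatLT cs t y} := by
      rintro (h | h)
      exacts [hxy.2 h, h.2.1.2 rfl]
    have hyT : y ∉ {t | t ∈ E ∧ BruhatLT cs x t ∧ BruhatLT cs t y} := fun h => h.2.2.2 rfl
    have hT : {t | t ∈ E ∧ BruhatLT cs x t ∧ BruhatLT cs t y}.Finite :=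
      (finite_setOf_bruhatLE cs y).subset fun t ht => ht.2.2.1
    rw [setOf_bruhatLE_bruhatLE_eq_insert hx hy hxy, finsum_mem_insert _ hxT (hT.insert y),
      finsum_mem_insert _ hyT hT, strictChainSum_eq Γ L Rp hx hy hxy, Rsingle,
      Rp_self hPdiag hPdef hx, hPdiag y hy]
    simp only [sub_self, qp_zero, map_one, one_mul, mul_one]
    congr 2
    refine finsum_mem_congr rfl fun t ht => ?_
    rw [P_eq_Lhalf_strictChainSum hPdiag hPdeg hPdef ht.1 hy ht.2.2, Uhalf_qp_mul_barZ]
  calc P x y = Lhalf Γ (L y - L x) (P x y) := hP.symm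
    _ = Lhalf Γ (L y - L x) (Uhalf Γ (L y - L x) (qp Γ (L y - L x) * barZ Γ (P x y))) +
          Lhalf Γ (L y - L x) (strictChainSum Γ cs L Rp E x y) := by
      conv_lhs => rw [hsplit]
      rw [Lhalf_add, Uhalf_qp_mul_barZ, hP]
    _ = Lhalf Γ (L y - L x) (strictChainSum Γ cs L Rp E x y) := by rw [Lhalf_Uhalf, zero_add]
termination_by cs.length y - cs.length x
decreasing_by
  have := ht.2.1.length_lt
  have := ht.2.2.length_lt
  omega

end KazhdanLusztig

theorem stmt_14_general
    {B W : Type} [Group W] {M : CoxeterMatrix B} (cs : CoxeterSystem M W)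
    (Γ : Type) [AddCommGroup Γ] [LinearOrder Γ] [IsOrderedAddMonoid Γ]
    -- `L` is a weight function on `W` with values in `Γ`, nonnegative on simple reflections
    (L : W → Γ)
    -- `E = E_J ⊆ D_J` is an ideal in the left weak Bruhat order
    (E : Set W)
    -- the weighted `R`-polynomials
    (Rp : W → W → LZ Γ)
    -- the weighted Kazhdan-Lusztig polynomials
    (P : W → W → LZ Γ)
    (hPdiag : ∀ x ∈ E, P x x = 1)
    (hPdeg : ∀ x y : W, x ∈ E → y ∈ E → BruhatLT cs x y → P x y ≠ 0 →
      ∃ d : Γ, degq Γ (P x y) = (d : WithBot Γ) ∧ d + d < L y - L x)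
    (hPdef : ∀ x y : W, x ∈ E → y ∈ E → BruhatLE cs x y →
      qp Γ (L y - L x) * barZ Γ (P x y) =
        ∑ᶠ t ∈ {t : W | t ∈ E ∧ BruhatLE cs x t ∧ BruhatLE cs t y}, Rp x t * P t y)
    (x y : W) (hx : x ∈ E) (hy : y ∈ E)
    (hxy : BruhatLT cs x y)
    :
    P x y = Lhalf Γ (L y - L x)
      (∑ᶠ φ ∈ {φ : MChain cs E x y | φ.IsStrict cs}, RchainAux Γ L Rp φ.r φ.c) := by
  exact P_eq_Lhalf_strictChainSum hPdiag hPdeg hPdef hx hy hxy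

theorem stmt_14
    {B W : Type} [Group W] {M : CoxeterMatrix B} (cs : CoxeterSystem M W)
    (Γ : Type) [AddCommGroup Γ] [LinearOrder Γ] [IsOrderedAddMonoid Γ]
    -- `L` is a weight function on `W` with values in `Γ`, nonnegative on simple reflections
    (L : W → Γ)
    (hLadd : ∀ u v : W, cs.length (u * v) = cs.length u + cs.length v →
      L (u * v) = L u + L v)
    (hLpos : ∀ i : B, (0 : Γ) ≤ L (cs.simple i))
    -- `H` is the Hecke algebra of `(W, S, L)`, free over `ℤ[Γ]` with basis `{T_w}`
    {H : Type} [Ring H] [Algebra (LZ Γ) H]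
    (T : Module.Basis W (LZ Γ) H)
    (hTone : T 1 = 1)
    (hTmul₁ : ∀ (i : B) (w : W), cs.length w < cs.length (cs.simple i * w) →
      T (cs.simple i) * T w = T (cs.simple i * w))
    (hTmul₂ : ∀ (i : B) (w : W), cs.length (cs.simple i * w) < cs.length w →
      T (cs.simple i) * T w =
        qp Γ (L (cs.simple i)) • T (cs.simple i * w) + (qp Γ (L (cs.simple i)) - 1) • T w)
    -- the bar involution on `H`
    (barH : H ≃+* H)
    (hbarHsmul : ∀ (a : LZ Γ) (h : H), barH (a • h) = barZ Γ a • barH h)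
    (hbarHT : ∀ i : B, barH (T (cs.simple i)) =
      qp Γ (-(L (cs.simple i))) • T (cs.simple i) + (qp Γ (-(L (cs.simple i))) - 1) • (1 : H))
    -- `E = E_J ⊆ D_J` is an ideal in the left weak Bruhat order
    (J : Set B) (E : Set W)
    (hED : E ⊆ DJ cs J)
    (hIdeal : ∀ y ∈ E, ∀ x : W, IsSuffix cs x y → x ∈ E)
    -- `E` is a `W`-graph ideal: the module `M(E_J, L)` with basis `{Γ_y := G y : y ∈ E}`
    {MM : Type} [AddCommGroup MM] [Module (LZ Γ) MM] [Module H MM]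
    [IsScalarTower (LZ Γ) H MM]
    (G : W → MM)
    (hGbasis : ∃ b : Module.Basis ↥E (LZ Γ) MM, ∀ y : ↥E, b y = G ↑y)
    (hSD : ∀ (i : B) (y : W), y ∈ E → cs.length (cs.simple i * y) < cs.length y →
      T (cs.simple i) • G y =
        qp Γ (L (cs.simple i)) • G (cs.simple i * y) + (qp Γ (L (cs.simple i)) - 1) • G y)
    (hSA : ∀ (i : B) (y : W), y ∈ E → cs.length y < cs.length (cs.simple i * y) →
      cs.simple i * y ∈ E → T (cs.simple i) • G y = G (cs.simple i * y))
    (hWD : ∀ (i : B) (y : W), y ∈ E → cs.length y < cs.length (cs.simple i * y) →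
      cs.simple i * y ∉ DJ cs J → T (cs.simple i) • G y = - G y)
    (hWA : ∀ (i : B) (y : W), y ∈ E → cs.length y < cs.length (cs.simple i * y) →
      cs.simple i * y ∈ DJ cs J → cs.simple i * y ∉ E →
      ∃ rr : W → LZ Γ, (∀ z : W, rr z ≠ 0 → z ∈ E ∧ BruhatLT cs z (cs.simple i * y)) ∧
        (∀ z : W, ∃ g : LZ Γ, rr z = qp Γ (L (cs.simple i)) * g) ∧
        {z : W | rr z ≠ 0}.Finite ∧
        T (cs.simple i) • G y = qp Γ (L (cs.simple i)) • G y - ∑ᶠ z : W, rr z • G z)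
    -- the `ℤ[Γ]`-semilinear bar involution on `M(E_J, L)`
    (barM : MM → MM)
    (hbarMadd : ∀ m m' : MM, barM (m + m') = barM m + barM m')
    (hbarMsmul : ∀ (a : LZ Γ) (m : MM), barM (a • m) = barZ Γ a • barM m)
    (hbarMone : barM (G 1) = G 1)
    (hbarMT : ∀ (w y : W), y ∈ E → barM (T w • G y) = barH (T w) • barM (G y))
    -- the weighted `R`-polynomials
    (Rp : W → W → LZ Γ)
    (hRpzero : ∀ x y : W, x ∉ E ∨ y ∉ E → Rp x y = 0)
    (hRpdef : ∀ y ∈ E, barM (G y) =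
      ∑ᶠ x ∈ E, (((eps cs x * eps cs y : ℤ) : LZ Γ) * qp Γ (-(L y)) * Rp x y) • G x)
    -- the weighted Kazhdan-Lusztig polynomials
    (P : W → W → LZ Γ)
    (hPdiag : ∀ x ∈ E, P x x = 1)
    (hPsupp : ∀ x y : W, ¬ BruhatLE cs x y → P x y = 0)
    (hPdeg : ∀ x y : W, x ∈ E → y ∈ E → BruhatLT cs x y → P x y ≠ 0 →
      ∃ d : Γ, degq Γ (P x y) = (d : WithBot Γ) ∧ d + d < L y - L x)
    (hPdef : ∀ x y : W, x ∈ E → y ∈ E → BruhatLE cs x y →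
      qp Γ (L y - L x) * barZ Γ (P x y) =
        ∑ᶠ t ∈ {t : W | t ∈ E ∧ BruhatLE cs x t ∧ BruhatLE cs t y}, Rp x t * P t y)
    (x y : W) (hx : x ∈ E) (hy : y ∈ E)
    (hxy : BruhatLT cs x y)
    :
    P x y = Lhalf Γ (L y - L x)
      (∑ᶠ φ ∈ {φ : MChain cs E x y | φ.IsStrict cs}, RchainAux Γ L Rp φ.r φ.c) :=
  stmt_14_general cs Γ L E Rp P hPdiag hPdeg hPdef x y hx hy hxy

end WGI
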